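/- arXiv:1701.00075 — 4 statements merged into one kernel-verified Lean document; each statement's English description precedes it below -/
import Mathlib

section
/- Let X be a topological space, E ⊆ X a subspace, and f : E → ℝ a function. Suppose there exists a sequence of Baire-one functions f_n : X → ℝ such that (f_n|_E) converges uniformly to f on E. Then f can be extended to a Baire-one function g : X → ℝ (i.e., g is a pointwise limit of continuous real-valued functions on X and g|_E = f). -/
open Set Filter Topology

/-- A map is Baire-one if it is a pointwise limit of continuous maps. -/
def BaireOne {X Y : Type*} [TopologicalSpace X] [TopologicalSpace Y] (f : X → Y) : Prop :=
  ∃ g : ℕ → X → Y, (∀ n, Continuous (g n)) ∧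
    ∀ x, Filter.Tendsto (fun n => g n x) Filter.atTop (nhds (f x))

/-- A regular transfinite sequence of open sets in `X`. -/
def RegularSeq {X : Type*} [TopologicalSpace X] (α : Ordinal.{0}) (U : Ordinal.{0} → Set X) : Prop :=
  (∀ ξ, ξ ≤ α → IsOpen (U ξ)) ∧ U 0 = ∅ ∧ U α = Set.univ ∧
  (∀ ξ η, ξ ≤ η → η ≤ α → U ξ ⊆ U η) ∧
  (∀ γ, γ ≤ α → Order.IsSuccLimit γ → U γ = ⋃ ξ < γ, U ξ)

/-- A functionally open set: the preimage of `(0,1]` under a continuous map to `[0,1]`. -/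
def FunctionallyOpen {X : Type*} [TopologicalSpace X] (U : Set X) : Prop :=
  ∃ φ : X → ℝ, Continuous φ ∧ (∀ x, φ x ∈ Set.Icc (0:ℝ) 1) ∧ U = φ ⁻¹' Set.Ioc (0:ℝ) 1

/-- A map is functionally countably fragmented. -/
def FunctCountFrag {X Y : Type*} [TopologicalSpace X] [MetricSpace Y] (f : X → Y) : Prop :=
  ∀ ε : ℝ, 0 < ε → ∃ (α : Ordinal.{0}) (U : Ordinal.{0} → Set X),
    α.card ≤ Cardinal.aleph0 ∧ RegularSeq α U ∧ (∀ ξ, ξ ≤ α → FunctionallyOpen (U ξ)) ∧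
    ∀ ξ, ξ < α → Metric.diam (f '' (U (ξ + 1) \ U ξ)) < ε
/-! Pass to a subsequence `fn (m k)` that is within `2⁻ᵏ⁻¹` of `f` on `E`, so that consecutive
differences are at most `2⁻ᵏ` on `E`. Clamping these differences to `[-2⁻ᵏ, 2⁻ᵏ]` changes nothing
on `E` but makes them bounded on all of `X` while keeping them Baire-one. By a Weierstrass
M-test for Baire-one functions, `fn (m 0) + ∑ₖ (clamped differences)` is Baire-one on `X`, and on
`E` the series telescopes to `f`. -/

section Clamp

variable {b t : ℝ}

theorem abs_max_neg_min_le (hb : 0 ≤ b) : |max (-b) (min b t)| ≤ b :=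
  abs_le.2 ⟨le_max_left _ _, max_le (by linarith) (min_le_left _ _)⟩

theorem max_neg_min_eq_self (ht : |t| ≤ b) : max (-b) (min b t) = t := by
  rw [min_eq_right (abs_le.1 ht).2, max_eq_right (abs_le.1 ht).1]

end Clamp

namespace BaireOne

variable {X Y Z W : Type*} [TopologicalSpace X] [TopologicalSpace Y] [TopologicalSpace Z]
  [TopologicalSpace W]

theorem comp {φ : Y → Z} (hφ : Continuous φ) {f : X → Y} (hf : BaireOne f) :
    BaireOne (φ ∘ f) := by
  obtain ⟨u, hu, hu_lim⟩ := hf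
  exact ⟨fun n => φ ∘ u n, fun n => hφ.comp (hu n), fun x => (hφ.tendsto _).comp (hu_lim x)⟩

theorem comp₂ {φ : Y → Z → W} (hφ : Continuous (Function.uncurry φ)) {f : X → Y} {g : X → Z}
    (hf : BaireOne f) (hg : BaireOne g) : BaireOne (fun x => φ (f x) (g x)) := by
  obtain ⟨u, hu, hu_lim⟩ := hf
  obtain ⟨v, hv, hv_lim⟩ := hg
  exact ⟨fun n x => φ (u n x) (v n x), fun n => hφ.comp₂ (hu n) (hv n),
    fun x => (hφ.tendsto _).comp ((hu_lim x).prodMk_nhds (hv_lim x))⟩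

theorem add {f g : X → ℝ} (hf : BaireOne f) (hg : BaireOne g) : BaireOne (f + g) :=
  comp₂ continuous_add hf hg

theorem sub {f g : X → ℝ} (hf : BaireOne f) (hg : BaireOne g) : BaireOne (f - g) :=
  comp₂ continuous_sub hf hg

theorem clamp {f : X → ℝ} (hf : BaireOne f) (b : ℝ) :
    BaireOne (fun x => max (-b) (min b (f x))) :=
  comp (φ := fun t => max (-b) (min b t)) (by fun_prop) hf

theorem exists_approx_abs_le {f : X → ℝ} (hf : BaireOne f) {b : ℝ} (hfb : ∀ x, |f x| ≤ b) :
    ∃ u : ℕ → X → ℝ, (∀ n, Continuous (u n)) ∧ (∀ n x, |u n x| ≤ b) ∧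
      ∀ x, Tendsto (fun n => u n x) atTop (𝓝 (f x)) := by
  obtain ⟨u, hu, hu_lim⟩ := hf
  refine ⟨fun n x => max (-b) (min b (u n x)), fun n => by fun_prop,
    fun n x => abs_max_neg_min_le ((abs_nonneg _).trans (hfb x)), fun x => ?_⟩
  rw [← max_neg_min_eq_self (hfb x)]
  exact tendsto_const_nhds.max (tendsto_const_nhds.min (hu_lim x))

theorem tsum_of_abs_le {f : ℕ → X → ℝ} (hf : ∀ k, BaireOne (f k)) {b : ℕ → ℝ} (hb : Summable b)
    (hfb : ∀ k x, |f k x| ≤ b k) : BaireOne (fun x => ∑' k, f k x) := by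
  choose u hu hub hu_lim using fun k => (hf k).exists_approx_abs_le (hfb k)
  -- the diagonal sequence `∑_{k < j} u k j`, handled by Tannery's theorem
  refine ⟨fun j x => ∑ k ∈ Finset.range j, u k j x,
    fun j => continuous_finsetSum _ fun k _ => hu k j, fun x => ?_⟩
  refine .congr (fun j => (sum_eq_tsum_indicator (fun k => u k j x) _).symm) <|
    tendsto_tsum_of_dominated_convergence hb (fun k => ?_) (.of_forall fun j k => ?_)
  · refine (hu_lim k x).congr' ?_
    filter_upwards [eventually_gt_atTop k] with j hj
    simp [hj]
  · by_cases hk : k < j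
    · simpa [hk] using hub k j x
    · simpa [hk] using (abs_nonneg _).trans (hfb k x)

end BaireOne

theorem exists_baireOne_extension_of_abs_sub_le {X : Type*} [TopologicalSpace X] {E : Set X}
    {f : E → ℝ} {F : ℕ → X → ℝ} (hF : ∀ n, BaireOne (F n)) {b : ℕ → ℝ} (hb : Summable b)
    (hFb : ∀ n (e : E), |F (n + 1) e - F n e| ≤ b n)
    (hFf : ∀ e : E, Tendsto (fun n => F n e) atTop (𝓝 (f e))) :
    ∃ g : X → ℝ, BaireOne g ∧ ∀ e : E, g e = f e := by
  obtain hE | hE := isEmpty_or_nonempty E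
  · exact ⟨F 0, hF 0, isEmptyElim⟩
  set d : ℕ → X → ℝ := fun n x => max (-b n) (min (b n) (F (n + 1) x - F n x))
  have hd_bound : ∀ n x, |d n x| ≤ b n := fun n x =>
    abs_max_neg_min_le ((abs_nonneg _).trans (hFb n hE.some))
  have hd_on_E : ∀ n (e : E), d n e = F (n + 1) e - F n e := fun n e =>
    max_neg_min_eq_self (hFb n e)
  refine ⟨F 0 + fun x => ∑' n, d n x,
    (hF 0).add (.tsum_of_abs_le (fun n => ((hF (n + 1)).sub (hF n)).clamp (b n)) hb hd_bound),
    fun e => ?_⟩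
  have hd_sum : HasSum (fun n => d n e) (f e - F 0 e) := by
    refine (hb.of_norm_bounded fun n => hd_bound n e).hasSum_iff_tendsto_nat.2 ?_
    simp only [hd_on_E, Finset.sum_range_sub (fun n => F n e)]
    exact (hFf e).sub_const _
  simp [hd_sum.tsum_eq]

theorem stmt5 {X : Type*} [TopologicalSpace X] (E : Set X) (f : E → ℝ) (fn : ℕ → X → ℝ)
    (hfn : ∀ n, BaireOne (fn n))
    (hconv : TendstoUniformly (fun n (e : E) => fn n e) f Filter.atTop) :
    ∃ g : X → ℝ, BaireOne g ∧ ∀ e : E, g e = f e := by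
  choose m hm using fun k : ℕ =>
    (Metric.tendstoUniformly_iff.1 hconv ((1 / 2) ^ (k + 1)) (by positivity)).exists
  refine exists_baireOne_extension_of_abs_sub_le (fun k => hfn (m k)) summable_geometric_two
    (fun k e => ?_) (fun e => ?_)
  · calc |fn (m (k + 1)) e - fn (m k) e| = dist (fn (m (k + 1)) e) (fn (m k) e) :=
          (Real.dist_eq _ _).symm
      _ ≤ dist (f e) (fn (m (k + 1)) e) + dist (f e) (fn (m k) e) := dist_triangle_left _ _ _
      _ ≤ (1 / 2) ^ (k + 2) + (1 / 2) ^ (k + 1) := add_le_add (hm (k + 1) e).le (hm k e).le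
      _ = 3 / 4 * (1 / 2) ^ k := by ring
      _ ≤ (1 / 2) ^ k := by linarith [pow_pos (by norm_num : (0 : ℝ) < 1 / 2) k]
  · refine tendsto_iff_dist_tendsto_zero.2 <| squeeze_zero (fun _ => dist_nonneg)
      (fun k => (dist_comm (f e) _ ▸ hm k e).le) ?_
    exact (tendsto_pow_atTop_nhds_zero_of_lt_one (by norm_num : (0 : ℝ) ≤ 1 / 2)
      (by norm_num)).comp (tendsto_add_atTop_nat 1)
end

section
/- The class of real-valued Baire-one functions on a topological space X is closed under uniformly convergent series: if g_n : X → ℝ are Baire-one with |g_n(x)| ≤ 2^{-n+1} for all x and n, then g(x) = Σ_{n=1}^∞ g_n(x) defines a Baire-one function on X. -/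
open Set Filter Topology

/-! Clamp continuous approximants of each `g n` to `[-c n, c n]`; the diagonal partial sums
`∑_{n ≤ k} F n k` are continuous, and they converge pointwise to `∑' n, g n` by Tannery's theorem
(dominated convergence for series) with the summable bound `c`. -/

namespace BaireOne

variable {X : Type*} [TopologicalSpace X]

theorem exists_continuous_abs_le {f : X → ℝ} {c : ℝ} (hf : BaireOne f) (hc : ∀ x, |f x| ≤ c) :
    ∃ F : ℕ → X → ℝ, (∀ k, Continuous (F k)) ∧ (∀ k x, |F k x| ≤ c) ∧
      ∀ x, Tendsto (fun k => F k x) atTop (𝓝 (f x)) := by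
  obtain ⟨F, hF_cont, hF_lim⟩ := hf
  refine ⟨fun k x => max (-c) (min (F k x) c), fun k => ?_, fun k x => ?_, fun x => ?_⟩
  · exact continuous_const.max ((hF_cont k).min continuous_const)
  · have hc_nonneg : 0 ≤ c := (abs_nonneg _).trans (hc x)
    exact abs_le.mpr ⟨le_max_left _ _, max_le (by linarith) (min_le_right _ _)⟩
  · obtain ⟨hlo, hhi⟩ := abs_le.mp (hc x)
    have hclamp : max (-c) (min (f x) c) = f x := by rw [min_eq_left hhi, max_eq_right hlo]
    simpa only [hclamp] using
      (tendsto_const_nhds (x := -c)).max ((hF_lim x).min (tendsto_const_nhds (x := c)))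

theorem tsum {g : ℕ → X → ℝ} (hg : ∀ n, BaireOne (g n)) {c : ℕ → ℝ} (hc : Summable c)
    (hgc : ∀ n x, |g n x| ≤ c n) : BaireOne (fun x => ∑' n, g n x) := by
  choose F hF_cont hF_le hF_lim using fun n => (hg n).exists_continuous_abs_le (hgc n)
  refine ⟨fun k x => ∑ n ∈ Finset.range (k + 1), F n k x,
    fun k => continuous_finsetSum _ fun n _ => hF_cont n k, fun x => ?_⟩
  simp_rw [sum_eq_tsum_indicator (fun n => F n _ x)]
  refine tendsto_tsum_of_dominated_convergence hc (fun n => ?_) (Eventually.of_forall fun k n => ?_)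
  · refine (hF_lim n x).congr' ?_
    filter_upwards [eventually_ge_atTop n] with k hk
    simp [Nat.lt_succ_of_le hk]
  · rw [Set.indicator_apply]
    split_ifs
    · exact hF_le n k x
    · simpa using (abs_nonneg _).trans (hgc n x)

end BaireOne

theorem stmt6 {X : Type*} [TopologicalSpace X] (g : ℕ → X → ℝ) (hg : ∀ n, BaireOne (g n))
    (hb : ∀ n x, |g n x| ≤ 2 * (1 / 2) ^ n) :
    BaireOne (fun x => ∑' n, g n x) :=
  BaireOne.tsum hg (summable_geometric_two.mul_left 2) hb
end

section
/- Let X be a compact Hausdorff space, Y a metric space, and f ∈ B_1(X,Y) a Baire-one map. Suppose f factors as f = g ∘ φ where φ : X → Z is continuous, Z is a metrizable compact space, and g ∈ B_1(Z,Y). Then f is functionally countably fragmented; in particular (granting the factorization, which always exists), every Baire-one map from a compact Hausdorff space to a metric space is functionally countably fragmented. -/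
open Set Filter Topology

/-!
Pulling back along `φ` reduces everything to `g` on the compact metrizable space `Z`. There the
Baire category theorem, applied to the closed complement of an open set `S ≠ Z`, yields an open
`V` meeting `Sᶜ` on which `g` oscillates by at most `ε / 2`. Adjoining such sets transfinitely
gives an increasing sequence of open sets; since `Z` is second countable it cannot keep growing
for `ω₁` steps, so it reaches `Z` at a countable ordinal. Open sets of metrizable spaces are
zero-set complements, hence functionally open.
-/

theorem IsOpen.functionallyOpen {X : Type*} [TopologicalSpace X] [PerfectlyNormalSpace X]
    {U : Set X} (hU : IsOpen U) : FunctionallyOpen U := by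
  obtain ⟨f, hf, hf01⟩ :=
    perfectlyNormalSpace_iff_forall_isClosed_preimage_zero.1 ‹_› Uᶜ hU.isClosed_compl
  refine ⟨f, f.continuous, hf01, ?_⟩
  rw [← compl_compl U, hf]
  ext x
  simp [(hf01 x).1.lt_iff_ne', (hf01 x).2]

theorem FunctionallyOpen.preimage {X Z : Type*} [TopologicalSpace X] [TopologicalSpace Z]
    {V : Set Z} (hV : FunctionallyOpen V) {φ : X → Z} (hφ : Continuous φ) :
    FunctionallyOpen (φ ⁻¹' V) := by
  obtain ⟨ψ, hψ, hψ01, rfl⟩ := hV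
  exact ⟨ψ ∘ φ, hψ.comp hφ, fun x => hψ01 (φ x), rfl⟩

theorem RegularSeq.preimage {X Z : Type*} [TopologicalSpace X] [TopologicalSpace Z]
    {α : Ordinal.{0}} {U : Ordinal.{0} → Set Z} (hU : RegularSeq α U) {φ : X → Z}
    (hφ : Continuous φ) : RegularSeq α (fun ξ => φ ⁻¹' U ξ) := by
  obtain ⟨hopen, hzero, htop, hmono, hlimit⟩ := hU
  refine ⟨fun ξ hξ => (hopen ξ hξ).preimage hφ, by simp [hzero], by simp [htop],
    fun ξ η hξη hη => preimage_mono (hmono ξ η hξη hη), fun γ hγ hlim => ?_⟩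
  simp only [hlimit γ hγ hlim, preimage_iUnion]

theorem BaireOne.comp_continuous {X Z Y : Type*} [TopologicalSpace X] [TopologicalSpace Z]
    [TopologicalSpace Y] {g : Z → Y} (hg : BaireOne g) {φ : X → Z} (hφ : Continuous φ) :
    BaireOne (g ∘ φ) := by
  obtain ⟨G, hGc, hGlim⟩ := hg
  exact ⟨fun n => G n ∘ φ, fun n => (hGc n).comp hφ, fun x => hGlim (φ x)⟩

/-- On the closed sets `A n` where `G n` is `δ/4`-close to all later `G m`, the limit `g` is
`δ/4`-close to `G n`; one of them has interior by the Baire category theorem, and there the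
continuity of `G n` gives the open set. -/
theorem BaireOne.exists_isOpen_forall_dist_le {Z Y : Type*} [TopologicalSpace Z] [BaireSpace Z]
    [Nonempty Z] [PseudoMetricSpace Y] {g : Z → Y} (hg : BaireOne g) {δ : ℝ} (hδ : 0 < δ) :
    ∃ W : Set Z, IsOpen W ∧ W.Nonempty ∧ ∀ x ∈ W, ∀ y ∈ W, dist (g x) (g y) ≤ δ := by
  obtain ⟨G, hGc, hGlim⟩ := hg
  set η := δ / 4
  have hη : 0 < η := by positivity
  set A : ℕ → Set Z := fun n => ⋂ m ≥ n, {x | dist (G n x) (G m x) ≤ η}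
  have hA_closed (n : ℕ) : IsClosed (A n) :=
    isClosed_biInter fun m _ => isClosed_le ((hGc n).dist (hGc m)) continuous_const
  have hA_cover : ⋃ n, A n = univ := by
    refine eq_univ_of_forall fun x => mem_iUnion.2 ?_
    obtain ⟨N, hN⟩ := Metric.tendsto_atTop.1 (hGlim x) (η / 2) (half_pos hη)
    refine ⟨N, mem_iInter₂.2 fun m hm => ?_⟩
    calc dist (G N x) (G m x) ≤ dist (G N x) (g x) + dist (G m x) (g x) := dist_triangle_right ..
      _ ≤ η / 2 + η / 2 := add_le_add (hN N le_rfl).le (hN m hm).le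
      _ = η := add_halves η
  have hA_limit (n : ℕ) (x : Z) (hx : x ∈ A n) : dist (G n x) (g x) ≤ η :=
    le_of_tendsto (tendsto_const_nhds.dist (hGlim x))
      (eventually_atTop.2 ⟨n, fun m hm => mem_iInter₂.1 hx m hm⟩)
  obtain ⟨n, x₀, hx₀⟩ := nonempty_interior_of_iUnion_of_closed hA_closed hA_cover
  refine ⟨interior (A n) ∩ G n ⁻¹' Metric.ball (G n x₀) η,
    isOpen_interior.inter ((hGc n).isOpen_preimage _ Metric.isOpen_ball),
    ⟨x₀, hx₀, Metric.mem_ball_self hη⟩, ?_⟩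
  rintro x ⟨hxA, hxB⟩ y ⟨hyA, hyB⟩
  calc dist (g x) (g y) ≤ dist (G n x) (g x) + dist (G n x) (G n y) + dist (G n y) (g y) := by
        rw [dist_comm (G n x)]; exact dist_triangle4 ..
    _ ≤ η + (η + η) + η := by
        gcongr
        · exact hA_limit n x (interior_subset hxA)
        · exact (dist_triangle_right _ _ _).trans (add_le_add hxB.le hyB.le)
        · exact hA_limit n y (interior_subset hyA)
    _ = δ := by ring

theorem BaireOne.exists_isOpen_forall_dist_le_of_ne_univ {Z Y : Type*} [TopologicalSpace Z]
    [CompactSpace Z] [T2Space Z] [PseudoMetricSpace Y] {g : Z → Y} (hg : BaireOne g) {δ : ℝ}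
    (hδ : 0 < δ) {S : Set Z} (hS : IsOpen S) (hS_ne : S ≠ univ) :
    ∃ V : Set Z, IsOpen V ∧ (V \ S).Nonempty ∧
      ∀ x ∈ V \ S, ∀ y ∈ V \ S, dist (g x) (g y) ≤ δ := by
  have : CompactSpace (Sᶜ : Set Z) := isCompact_iff_compactSpace.1 hS.isClosed_compl.isCompact
  have : Nonempty (Sᶜ : Set Z) := (nonempty_compl.2 hS_ne).to_subtype
  have hg' := hg.comp_continuous (φ := ((↑) : (Sᶜ : Set Z) → Z)) continuous_subtype_val
  obtain ⟨W, hW, hW_ne, hW_dist⟩ := hg'.exists_isOpen_forall_dist_le hδ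
  obtain ⟨V, hV, rfl⟩ := isOpen_induced_iff.1 hW
  have hVS : V \ S = Subtype.val '' (Subtype.val ⁻¹' V : Set (Sᶜ : Set Z)) := by
    rw [Subtype.image_preimage_coe, sdiff_eq, inter_comm]
  refine ⟨V, hV, hVS ▸ hW_ne.image _, ?_⟩
  rw [hVS]
  rintro _ ⟨x, hx, rfl⟩ _ ⟨y, hy, rfl⟩
  exact hW_dist x hx y hy

theorem isOpen_transfiniteIterate {Z J : Type*} [TopologicalSpace Z] [LinearOrder J]
    [OrderBot J] [SuccOrder J] [WellFoundedLT J] {T : Set Z → Set Z}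
    (hT : ∀ S, IsOpen S → IsOpen (T S)) {S₀ : Set Z} (hS₀ : IsOpen S₀) (j : J) :
    IsOpen (transfiniteIterate T j S₀) := by
  induction j using SuccOrder.limitRecOn with
  | isMin j hj => rwa [hj.eq_bot, transfiniteIterate_bot]
  | succ j hj ih => rw [transfiniteIterate_succ _ _ _ hj]; exact hT _ ih
  | isSuccLimit j hj ih =>
    rw [transfiniteIterate_limit _ _ _ hj]
    exact isOpen_iUnion fun k => ih k.1 k.2

theorem transfiniteIterate_add_one {I : Type*} [SupSet I] (φ : I → I) (i₀ : I)
    (o : Ordinal.{0}) : transfiniteIterate φ (o + 1) i₀ = φ (transfiniteIterate φ o i₀) := by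
  rw [← Order.succ_eq_add_one, transfiniteIterate_succ _ _ _ (not_isMax o)]

/-- A basic open set inside `U (ξ + 1)` but not inside `U ξ` determines `ξ`, so `Iio α` injects
into a countable basis. -/
theorem Ordinal.card_le_aleph0_of_isOpen_of_not_add_one_subset {Z : Type*} [TopologicalSpace Z]
    [SecondCountableTopology Z] {U : Ordinal.{0} → Set Z} (hopen : ∀ ξ, IsOpen (U ξ))
    (hmono : Monotone U) {α : Ordinal.{0}} (hgrow : ∀ ξ < α, ¬ U (ξ + 1) ⊆ U ξ) :
    α.card ≤ Cardinal.aleph0 := by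
  set B := TopologicalSpace.countableBasis Z
  have hB := TopologicalSpace.isBasis_countableBasis Z
  have : Countable B := (TopologicalSpace.countable_countableBasis Z).to_subtype
  have (ξ : Iio α) : ∃ b ∈ B, b ⊆ U (ξ + 1) ∧ ¬ b ⊆ U ξ := by
    obtain ⟨x, hx, hxξ⟩ := not_subset.1 (hgrow ξ ξ.2)
    obtain ⟨b, hbB, hxb, hb⟩ := hB.exists_subset_of_mem_open hx (hopen _)
    exact ⟨b, hbB, hb, fun h => hxξ (h hxb)⟩
  choose b hbB hb_sub hb_not using this
  have hinj : Function.Injective fun ξ => (⟨b ξ, hbB ξ⟩ : B) := by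
    refine Function.Injective.of_lt_imp_ne fun ξ ζ hlt heq => hb_not ζ ?_
    have hξζ : (ξ : Ordinal) + 1 ≤ ζ := Order.add_one_le_of_lt hlt
    have hbeq : b ξ = b ζ := congrArg Subtype.val heq
    rw [← hbeq]
    exact (hb_sub ξ).trans (hmono hξζ)
  have : Countable (Iio α) := hinj.countable
  have hα := Cardinal.mk_le_aleph0 (α := Iio α)
  rwa [Cardinal.mk_Iio_ordinal, Cardinal.lift_le_aleph0] at hα

theorem exists_regularSeq_transfiniteIterate {Z : Type*} [TopologicalSpace Z]
    [SecondCountableTopology Z] {T : Set Z → Set Z} (hsub : ∀ S, S ⊆ T S)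
    (hopen : ∀ S, IsOpen S → IsOpen (T S)) (hgrow : ∀ S, IsOpen S → S ≠ univ → ¬ T S ⊆ S) :
    ∃ α : Ordinal.{0}, α.card ≤ Cardinal.aleph0 ∧
      RegularSeq α (fun ξ => transfiniteIterate T ξ ∅) := by
  set U : Ordinal.{0} → Set Z := fun ξ => transfiniteIterate T ξ ∅
  have hU_open (ξ : Ordinal.{0}) : IsOpen (U ξ) :=
    isOpen_transfiniteIterate hopen isOpen_empty ξ
  have hU_mono : Monotone U := monotone_transfiniteIterate T ∅ hsub
  have hcard (α : Ordinal.{0}) (hα : ∀ ξ < α, U ξ ≠ univ) : α.card ≤ Cardinal.aleph0 :=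
    Ordinal.card_le_aleph0_of_isOpen_of_not_add_one_subset hU_open hU_mono fun ξ hξ => by
      simpa only [U, transfiniteIterate_add_one] using hgrow _ (hU_open ξ) (hα ξ hξ)
  have hexists : ∃ α, U α = univ := by
    by_contra! h
    have := hcard (Cardinal.aleph 1).ord fun ξ _ => h ξ
    rw [Cardinal.card_ord] at this
    exact Cardinal.aleph0_lt_aleph_one.not_ge this
  obtain ⟨α, hα, hmin⟩ := wellFounded_lt.has_min _ hexists
  refine ⟨α, hcard α fun ξ hξ h => hmin ξ h hξ, fun ξ _ => hU_open ξ,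
    transfiniteIterate_bot T ∅, hα, fun ξ η h _ => hU_mono h,
    fun γ _ hγ => (transfiniteIterate_limit _ _ _ hγ).trans (iUnion_subtype _ _)⟩

theorem BaireOne.exists_regularSeq_forall_dist_le {Z Y : Type*} [TopologicalSpace Z]
    [CompactSpace Z] [T2Space Z] [SecondCountableTopology Z] [PseudoMetricSpace Y] {g : Z → Y}
    (hg : BaireOne g) {δ : ℝ} (hδ : 0 < δ) :
    ∃ (α : Ordinal.{0}) (U : Ordinal.{0} → Set Z), α.card ≤ Cardinal.aleph0 ∧ RegularSeq α U ∧
      ∀ ξ < α, ∀ x ∈ U (ξ + 1) \ U ξ, ∀ y ∈ U (ξ + 1) \ U ξ, dist (g x) (g y) ≤ δ := by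
  have hstep (S : Set Z) : ∃ S', S ⊆ S' ∧ (IsOpen S → IsOpen S') ∧
      (IsOpen S → S ≠ univ → ¬ S' ⊆ S) ∧ ∀ x ∈ S' \ S, ∀ y ∈ S' \ S, dist (g x) (g y) ≤ δ := by
    by_cases hS : IsOpen S ∧ S ≠ univ
    · obtain ⟨V, hV, hV_ne, hV_dist⟩ := hg.exists_isOpen_forall_dist_le_of_ne_univ hδ hS.1 hS.2
      refine ⟨S ∪ V, subset_union_left, fun _ => hS.1.union hV, fun _ _ h => ?_, ?_⟩
      · obtain ⟨x, hxV, hxS⟩ := hV_ne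
        exact hxS (h (subset_union_right hxV))
      · simpa only [union_sdiff_left] using hV_dist
    · exact ⟨S, subset_rfl, id, fun h h' => (hS ⟨h, h'⟩).elim, by simp⟩
  choose T hsub hopen hgrow hdist using hstep
  obtain ⟨α, hα, hU⟩ := exists_regularSeq_transfiniteIterate hsub hopen hgrow
  exact ⟨α, fun ξ => transfiniteIterate T ξ ∅, hα, hU, fun ξ _ => by
    simpa only [transfiniteIterate_add_one] using hdist (transfiniteIterate T ξ ∅)⟩

theorem stmt13_general {X Z Y : Type*} [TopologicalSpace X]
    [TopologicalSpace Z] [CompactSpace Z] [TopologicalSpace.MetrizableSpace Z]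
    [MetricSpace Y] (f : X → Y)
    (φ : X → Z) (hφ : Continuous φ) (g : Z → Y) (hg : BaireOne g)
    (hfac : f = g ∘ φ) :
    FunctCountFrag f := by
  subst hfac
  intro ε hε
  obtain ⟨α, U, hα, hU, hdist⟩ := hg.exists_regularSeq_forall_dist_le (half_pos hε)
  refine ⟨α, fun ξ => φ ⁻¹' U ξ, hα, hU.preimage hφ,
    fun ξ hξ => (hU.1 ξ hξ).functionallyOpen.preimage hφ, fun ξ hξ => ?_⟩
  calc Metric.diam ((g ∘ φ) '' (φ ⁻¹' U (ξ + 1) \ φ ⁻¹' U ξ)) ≤ ε / 2 := by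
        refine Metric.diam_le_of_forall_dist_le (half_pos hε).le ?_
        rintro _ ⟨x, hx, rfl⟩ _ ⟨y, hy, rfl⟩
        exact hdist ξ hξ (φ x) hx (φ y) hy
    _ < ε := half_lt_self hε

theorem stmt13 {X Z Y : Type*} [TopologicalSpace X] [CompactSpace X] [T2Space X]
    [TopologicalSpace Z] [CompactSpace Z] [TopologicalSpace.MetrizableSpace Z]
    [MetricSpace Y] (f : X → Y) (hf : BaireOne f)
    (φ : X → Z) (hφ : Continuous φ) (g : Z → Y) (hg : BaireOne g)
    (hfac : f = g ∘ φ) :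
    FunctCountFrag f :=
  stmt13_general f φ hφ g hg hfac
end

section
/- Every scattered topological space is hereditarily Baire: if every nonempty subset of X has an isolated point, then every closed subspace of X is a Baire space. -/
open Set Filter Topology

/-!
Being scattered passes to subspaces, so it suffices to show that a scattered space is Baire.
In a scattered space the isolated points are dense: a nonempty open set has a point isolated in
it, and that point is then isolated in the whole space. A dense set contains every isolated
point, so a countable intersection of dense sets still contains the dense set of isolated points.
-/

class ScatteredSpace (X : Type*) [TopologicalSpace X] : Prop where
  exists_isolated : ∀ A : Set X, A.Nonempty → ∃ a ∈ A, ∃ V : Set X, IsOpen V ∧ V ∩ A = {a}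

section

variable {X Y : Type*} [TopologicalSpace X] [TopologicalSpace Y]

theorem Topology.IsEmbedding.scatteredSpace [ScatteredSpace X] {f : Y → X} (hf : IsEmbedding f) :
    ScatteredSpace Y where
  exists_isolated A hA := by
    obtain ⟨_, ⟨a, haA, rfl⟩, V, hV, hVA⟩ := ScatteredSpace.exists_isolated (f '' A) (hA.image f)
    refine ⟨a, haA, f ⁻¹' V, hV.preimage hf.continuous, ?_⟩
    rw [← preimage_image_eq A hf.injective, ← preimage_inter, hVA, ← image_singleton,
      preimage_image_eq _ hf.injective]

instance Subtype.scatteredSpace [ScatteredSpace X] {p : X → Prop} : ScatteredSpace (Subtype p) :=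
  IsEmbedding.subtypeVal.scatteredSpace

theorem ScatteredSpace.dense_setOf_isOpen_singleton [ScatteredSpace X] :
    Dense {x : X | IsOpen ({x} : Set X)} := by
  refine dense_iff_inter_open.2 fun W hW hWne => ?_
  obtain ⟨a, haW, V, hV, hVW⟩ := ScatteredSpace.exists_isolated W hWne
  exact ⟨a, haW, show IsOpen {a} from hVW ▸ hV.inter hW⟩

theorem Dense.mem_of_isOpen_singleton {s : Set X} (hs : Dense s) {x : X}
    (hx : IsOpen ({x} : Set X)) : x ∈ s := by
  obtain ⟨y, rfl, hy⟩ := hs.inter_open_nonempty {x} hx (singleton_nonempty x)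
  exact hy

theorem BaireSpace.of_dense_setOf_isOpen_singleton (h : Dense {x : X | IsOpen ({x} : Set X)}) :
    BaireSpace X where
  baire_property _ _ hd :=
    h.mono fun _ hx => mem_iInter.2 fun n => (hd n).mem_of_isOpen_singleton hx

instance ScatteredSpace.baireSpace [ScatteredSpace X] : BaireSpace X :=
  .of_dense_setOf_isOpen_singleton ScatteredSpace.dense_setOf_isOpen_singleton

end

theorem stmt16 {X : Type*} [TopologicalSpace X]
    (hscat : ∀ A : Set X, A.Nonempty → ∃ a ∈ A, ∃ V : Set X, IsOpen V ∧ V ∩ A = {a}) :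
    ∀ F : Set X, IsClosed F → BaireSpace F := by
  have : ScatteredSpace X := ⟨hscat⟩
  exact fun F _ => inferInstance
end
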